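/- Let S be a semigroup and A ⊆ S a complete subset (A = A''). Then the centre Z(A) = A ∩ A' is both abelian and complete (Z(A) = Z(A)''). -/
import Mathlib

/-- The commutant of a subset of a semigroup. -/
def commutant {S : Type*} [Mul S] (A : Set S) : Set S :=
  {s | ∀ a ∈ A, s * a = a * s}

/-- The centre Z(A) = A ∩ A' of a complete subset is abelian and complete. -/
theorem stmt_13 {S : Type*} [Semigroup S] (A : Set S)
    (hA : A = commutant (commutant A)) :
    (∀ a ∈ A ∩ commutant A, ∀ b ∈ A ∩ commutant A, a * b = b * a) ∧
    A ∩ commutant A = commutant (commutant (A ∩ commutant A)) := by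
  constructor
  · intro a ha b hb
    exact ha.2 b hb.1
  · apply Set.Subset.antisymm
    · intro s hs a ha
      exact (ha s hs).symm
    · intro s hs
      constructor
      · rw [hA]
        intro a ha
        exact hs a (fun z hz => ha z hz.1)
      · intro a ha
        have ha' : a ∈ commutant (commutant A) := hA ▸ ha
        exact hs a (fun z hz => ha' z hz.2)
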